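/- Let φ be a generalized P-encoding on n input variables in regular form, and suppose there are pairwise distinct i, j, k ∈ [n] with L_{φ,i} = {ℓ, ℓ_1}, L_{φ,j} = {ℓ, ℓ_2}, and L_{φ,k} = {ℓ, ℓ_3} for some literals ℓ, ℓ_1, ℓ_2, ℓ_3 over the auxiliary variables. Then the variables var(ℓ_1), var(ℓ_2), and var(ℓ_3) are pairwise distinct. -/

import Mathlib

/-- Variables are natural numbers. -/
abbrev Var : Type := ℕ

/-- A literal is a variable together with a polarity (`true` = positive). -/
abbrev Lit : Type := Var × Bool

/-- A clause is a finite set of literals. -/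
abbrev Clause : Type := Finset Lit

/-- A CNF formula is a finite set of clauses; its size is its number of clauses. -/
abbrev CNF : Type := Finset Clause

/-- Evaluation of a literal under a (total) assignment. -/
def Lit.eval (τ : Var → Bool) (l : Lit) : Bool :=
  if l.2 then τ l.1 else !(τ l.1)

/-- The negation of a literal. -/
def Lit.negate (l : Lit) : Lit := (l.1, !l.2)

/-- An assignment satisfies a clause if it makes at least one of its literals true. -/
def Clause.sat (τ : Var → Bool) (C : Clause) : Prop :=
  ∃ l ∈ C, Lit.eval τ l = true

/-- An assignment satisfies a CNF formula if it satisfies every clause. -/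
def CNF.sat (τ : Var → Bool) (φ : CNF) : Prop :=
  ∀ C ∈ φ, Clause.sat τ C

/-- The set of variables occurring in a CNF formula. -/
def CNF.vars (φ : CNF) : Finset Var :=
  φ.sup (fun C => C.image Prod.fst)

/-- The auxiliary variables of a formula whose input variables are `0, …, n-1`. -/
def CNF.auxVars (n : ℕ) (φ : CNF) : Finset Var :=
  CNF.vars φ \ Finset.range n

/-- `φ` encodes the Boolean function `f`, where the input variables `x_1, …, x_n`
are the variables `0, …, n-1`: for every assignment `τ` of the input variables,
`f τ = ⊤` iff `τ` extends to a total assignment satisfying `φ`. -/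
def Encodes (n : ℕ) (f : (Fin n → Bool) → Bool) (φ : CNF) : Prop :=
  ∀ τ : Fin n → Bool,
    f τ = true ↔ ∃ σ : Var → Bool, (∀ i : Fin n, σ i.1 = τ i) ∧ CNF.sat σ φ

/-- A generalized P-encoding on `n` input variables (the input variables being
`0, …, n-1`): (a) `φ ∧ x_i` is satisfiable for each input variable, and
(b) `φ ⊨ ¬x_i ∨ ¬x_j` for all distinct input variables. -/
def GenPEncoding (n : ℕ) (φ : CNF) : Prop :=
  (∀ i < n, ∃ σ : Var → Bool, σ i = true ∧ CNF.sat σ φ) ∧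
  (∀ i < n, ∀ j < n, i ≠ j →
    ∀ σ : Var → Bool, CNF.sat σ φ → ¬(σ i = true ∧ σ j = true))

/-- `Qset φ i` is the set of clauses of `φ` containing the literal `¬x_i`. -/
def Qset (φ : CNF) (i : ℕ) : Finset Clause :=
  φ.filter (fun C => ((i : Var), false) ∈ C)

/-- `φ` is prime if no CNF formula obtained from `φ` by removing a literal from
one of its clauses is a generalized P-encoding on `n` input variables. -/
def PrimeEncoding (n : ℕ) (φ : CNF) : Prop :=
  GenPEncoding n φ ∧
  ∀ C ∈ φ, ∀ l ∈ C, ¬ GenPEncoding n (insert (C.erase l) (φ.erase C))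

/-- Regular form: for each input variable `x_i`, `|Q_{φ,i}| = 2`, the only input
variable occurring in the clauses of `Q_{φ,i}` is `x_i`, and each clause of
`Q_{φ,i}` has exactly two literals. -/
def RegularForm (n : ℕ) (φ : CNF) : Prop :=
  ∀ i < n, (Qset φ i).card = 2 ∧
    (∀ C ∈ Qset φ i, ∀ l ∈ C, l.1 < n → l.1 = i) ∧
    (∀ C ∈ Qset φ i, C.card = 2)

/-- `Lset φ i` is the set of literals `e` such that the clause `{¬x_i, e}`
belongs to `φ`. -/
def Lset (φ : CNF) (i : ℕ) : Set Lit :=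
  {e | ({((i : Var), false), e} : Clause) ∈ φ}


/-! Setting one input variable `x_m` to true in a model of a regular-form encoding
keeps it a model as long as `L_{φ,m}` stays true, since the two-literal clauses
`{¬x_m, e}` are the only clauses that `x_m` can falsify. In a P-encoding this is
impossible while another input variable is true. If `var ℓ₁ = var ℓ₂`, either
`ℓ₁ = ℓ₂`, and a model with `x_i` true makes `ℓ, ℓ₂` true so that `x_j` could be set
as well, or `ℓ₁ = ¬ℓ₂`, and in a model with `x_k` true (hence `ℓ` true) one of
`ℓ₁, ℓ₂` is true, so that `x_i` or `x_j` could be set as well. -/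

section

variable {φ : CNF} {σ : Var → Bool}

lemma Lit.eval_update_of_ne {l : Lit} {m : Var} (b : Bool) (h : l.1 ≠ m) :
    Lit.eval (Function.update σ m b) l = Lit.eval σ l := by
  simp [Lit.eval, Function.update_of_ne h]

lemma Lit.eval_eq_not_of_var_eq {a b : Lit} (hv : a.1 = b.1) (hpol : a.2 ≠ b.2) :
    Lit.eval σ a = !Lit.eval σ b := by
  obtain ⟨v, s⟩ := a
  obtain ⟨w, t⟩ := b
  obtain rfl : v = w := hv
  cases s <;> cases t <;> simp_all [Lit.eval]

lemma Lit.eval_eq_true_of_mem_Lset {p : Var} {e : Lit} (hσ : CNF.sat σ φ)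
    (hp : σ p = true) (he : e ∈ Lset φ p) : Lit.eval σ e = true := by
  obtain ⟨l, hl, hev⟩ := hσ _ he
  rcases Finset.mem_insert.mp hl with rfl | hl
  · simp [Lit.eval, hp] at hev
  · rwa [Finset.mem_singleton.mp hl] at hev

lemma exists_mem_Lset_eq_pair {m : Var} {C : Clause} (hC : C ∈ Qset φ m)
    (hcard : C.card = 2) : ∃ e ∈ Lset φ m, C = {((m : Var), false), e} := by
  obtain ⟨hCφ, hmC⟩ := Finset.mem_filter.mp hC
  obtain ⟨e, he⟩ : ∃ e, C.erase ((m : Var), false) = {e} :=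
    Finset.card_eq_one.mp (by rw [Finset.card_erase_of_mem hmC, hcard])
  have hCe : C = {((m : Var), false), e} := by
    rw [← he, Finset.insert_erase hmC]
  exact ⟨e, by rw [Lset, Set.mem_ofPred_eq, ← hCe]; exact hCφ, hCe⟩

lemma CNF.sat_update_true {m : Var} (hQ : ∀ C ∈ Qset φ m, C.card = 2)
    (hσ : CNF.sat σ φ) (hL : ∀ e ∈ Lset φ m, Lit.eval (Function.update σ m true) e = true) :
    CNF.sat (Function.update σ m true) φ := by
  intro C hC
  obtain ⟨l, hlC, hl⟩ := hσ C hC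
  by_cases hlm : l.1 = m
  · obtain ⟨v, s⟩ := l
    obtain rfl : v = m := hlm
    cases s
    · obtain ⟨e, he, rfl⟩ := exists_mem_Lset_eq_pair (Finset.mem_filter.mpr ⟨hC, hlC⟩)
        (hQ C (Finset.mem_filter.mpr ⟨hC, hlC⟩))
      exact ⟨e, by simp, hL e he⟩
    · exact ⟨_, hlC, by simp [Lit.eval]⟩
  · exact ⟨l, hlC, by rwa [Lit.eval_update_of_ne _ hlm]⟩

variable {n : ℕ}

lemma GenPEncoding.eval_eq_false_of_Lset_eq_pair (h : GenPEncoding n φ)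
    (hreg : RegularForm n φ) {m r : Var} (hm : m < n) (hr : r < n) (hmr : m ≠ r)
    {ℓ a : Lit} (hℓm : ℓ.1 ≠ m) (ham : a.1 ≠ m) (hL : Lset φ m = {ℓ, a})
    (hσ : CNF.sat σ φ) (hσr : σ r = true) (hℓ : Lit.eval σ ℓ = true) :
    Lit.eval σ a = false := by
  by_contra ha
  rw [Bool.not_eq_false] at ha
  have hsat : CNF.sat (Function.update σ m true) φ := by
    refine CNF.sat_update_true (hreg m hm).2.2 hσ ?_
    rw [hL]
    rintro e (rfl | rfl)
    · rwa [Lit.eval_update_of_ne _ hℓm]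
    · rwa [Lit.eval_update_of_ne _ ham]
  exact h.2 m hm r hr hmr _ hsat
    ⟨Function.update_self .., by rwa [Function.update_of_ne hmr.symm]⟩

lemma GenPEncoding.var_ne_of_Lset_eq_pair (h : GenPEncoding n φ) (hreg : RegularForm n φ)
    {p q r : Var} (hp : p < n) (hq : q < n) (hr : r < n)
    (hpq : p ≠ q) (hpr : p ≠ r) (hqr : q ≠ r) {ℓ a b : Lit}
    (hℓ : n ≤ ℓ.1) (ha : n ≤ a.1) (hb : n ≤ b.1)
    (hpL : Lset φ p = {ℓ, a}) (hqL : Lset φ q = {ℓ, b}) (hℓr : ℓ ∈ Lset φ r) :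
    a.1 ≠ b.1 := by
  intro hv
  have var_ne {e : Lit} {m : Var} (he : n ≤ e.1) (hm : m < n) : e.1 ≠ m :=
    Nat.ne_of_gt (hm.trans_le he)
  by_cases hpol : a.2 = b.2
  · obtain rfl : a = b := Prod.ext hv hpol
    obtain ⟨σ, hσp, hσ⟩ := h.1 p hp
    have hmem (e : Lit) (he : e ∈ ({ℓ, a} : Set Lit)) : Lit.eval σ e = true :=
      Lit.eval_eq_true_of_mem_Lset hσ hσp (hpL ▸ he)
    have := h.eval_eq_false_of_Lset_eq_pair hreg hq hp hpq.symm (var_ne hℓ hq) (var_ne ha hq)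
      hqL hσ hσp (hmem ℓ (by simp))
    simp [hmem a (by simp)] at this
  · obtain ⟨σ, hσr, hσ⟩ := h.1 r hr
    have hσℓ := Lit.eval_eq_true_of_mem_Lset hσ hσr hℓr
    have hσa := h.eval_eq_false_of_Lset_eq_pair hreg hp hr hpr (var_ne hℓ hp) (var_ne ha hp)
      hpL hσ hσr hσℓ
    have hσb := h.eval_eq_false_of_Lset_eq_pair hreg hq hr hqr (var_ne hℓ hq) (var_ne hb hq)
      hqL hσ hσr hσℓ
    simp [Lit.eval_eq_not_of_var_eq (σ := σ) hv hpol, hσb] at hσa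

end

/-- Let `φ` be a generalized P-encoding on `n` input variables in regular form,
and suppose there are pairwise distinct `i, j, k ∈ [n]` with
`L_{φ,i} = {ℓ, ℓ₁}`, `L_{φ,j} = {ℓ, ℓ₂}`, `L_{φ,k} = {ℓ, ℓ₃}` for literals over
the auxiliary variables (variables `≥ n`). Then the variables of `ℓ₁`, `ℓ₂`,
`ℓ₃` are pairwise distinct. -/
theorem pairwise_distinct_vars (n : ℕ) (φ : CNF)
    (h : GenPEncoding n φ) (hreg : RegularForm n φ)
    (i j k : ℕ) (hi : i < n) (hj : j < n) (hk : k < n)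
    (hij : i ≠ j) (hik : i ≠ k) (hjk : j ≠ k)
    (ℓ ℓ₁ ℓ₂ ℓ₃ : Lit)
    (haux : n ≤ ℓ.1 ∧ n ≤ ℓ₁.1 ∧ n ≤ ℓ₂.1 ∧ n ≤ ℓ₃.1)
    (h1 : Lset φ i = {ℓ, ℓ₁}) (h2 : Lset φ j = {ℓ, ℓ₂}) (h3 : Lset φ k = {ℓ, ℓ₃}) :
    ℓ₁.1 ≠ ℓ₂.1 ∧ ℓ₁.1 ≠ ℓ₃.1 ∧ ℓ₂.1 ≠ ℓ₃.1 := by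
  obtain ⟨hℓ, hℓ₁, hℓ₂, hℓ₃⟩ := haux
  have hℓi : ℓ ∈ Lset φ i := h1 ▸ Set.mem_insert ℓ _
  have hℓj : ℓ ∈ Lset φ j := h2 ▸ Set.mem_insert ℓ _
  have hℓk : ℓ ∈ Lset φ k := h3 ▸ Set.mem_insert ℓ _
  exact ⟨h.var_ne_of_Lset_eq_pair hreg hi hj hk hij hik hjk hℓ hℓ₁ hℓ₂ h1 h2 hℓk,
    h.var_ne_of_Lset_eq_pair hreg hi hk hj hik hij hjk.symm hℓ hℓ₁ hℓ₃ h1 h3 hℓj,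
    h.var_ne_of_Lset_eq_pair hreg hj hk hi hjk hij.symm hik.symm hℓ hℓ₂ hℓ₃ h2 h3 hℓi⟩
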